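/- The elements e·h + e, h² − h − 2·f·e, f·h − f, f², and h³ − h all belong to the two-sided ideal I generated by e². Equivalently, in the quotient algebra A/I the relations e·h + e = 0, h² − h − 2·f·e = 0, f·h − f = 0, e² = f² = 0, and h³ = h hold. -/
import Mathlib

/-- Helper: in a `ℚ`-algebra, an ideal is divisible: if `n * x ∈ I` (nat `n ≠ 0`), then `x ∈ I`. -/
lemma mem_of_natCast_mul_mem {A : Type} [Ring A] [Algebra ℚ A] (I : TwoSidedIdeal A)
    (n : ℕ) (hn : (n : ℚ) ≠ 0) {x : A} (hx : (n : A) * x ∈ I) : x ∈ I := by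
  have h1 : x = algebraMap ℚ A (n : ℚ)⁻¹ * ((n : A) * x) := by
    rw [← mul_assoc, show ((n : A)) = algebraMap ℚ A (n : ℚ) by simp,
      ← map_mul, inv_mul_cancel₀ hn, map_one, one_mul]
  rw [h1]
  exact I.mul_mem_left _ _ hx

/-- let `A` be a unital associative `ℚ`-algebra and `e, h, f ∈ A` satisfy the
`sl₂` commutation relations; let `I` be the two-sided ideal generated by `e²`. Then
`e·h + e`, `h² − h − 2·f·e`, `f·h − f`, `f²`, and `h³ − h` all belong to `I`. -/
theorem stmt3 (A : Type) [Ring A] [Algebra ℚ A] (e h f : A)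
    (he : h * e - e * h = 2 * e) (hf : h * f - f * h = -(2 * f))
    (hef : e * f - f * e = h) :
    e * h + e ∈ TwoSidedIdeal.span {e ^ 2} ∧
    h ^ 2 - h - 2 * (f * e) ∈ TwoSidedIdeal.span {e ^ 2} ∧
    f * h - f ∈ TwoSidedIdeal.span {e ^ 2} ∧
    f ^ 2 ∈ TwoSidedIdeal.span {e ^ 2} ∧
    h ^ 3 - h ∈ TwoSidedIdeal.span {e ^ 2} := by
  set I := TwoSidedIdeal.span {e ^ 2} with hI
  have R1 : e * f = f * e + h := sub_eq_iff_eq_add'.mp hef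
  have R2 : h * e = e * h + 2 * e := sub_eq_iff_eq_add'.mp he
  have R3 : h * f = f * h + -(2 * f) := sub_eq_iff_eq_add'.mp hf
  have m0 : e ^ 2 ∈ I := TwoSidedIdeal.subset_span rfl
  -- first element
  have idA : e ^ 2 * f = f * e ^ 2 + (2 * (e * h) + 2 * e) := by
    calc e ^ 2 * f = e * (e * f) := by rw [pow_two, mul_assoc]
      _ = e * (f * e) + e * h := by rw [R1]; noncomm_ring
      _ = (e * f) * e + e * h := by rw [mul_assoc]
      _ = (f * e + h) * e + e * h := by rw [R1]
      _ = (f * e) * e + h * e + e * h := by noncomm_ring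
      _ = (f * e) * e + (e * h + 2 * e) + e * h := by rw [R2]
      _ = f * e ^ 2 + (2 * (e * h) + 2 * e) := by noncomm_ring
  have m1 : e * h + e ∈ I := by
    refine mem_of_natCast_mul_mem I 2 (by norm_num) ?_
    have : ((2 : ℕ) : A) * (e * h + e) = e ^ 2 * f - f * e ^ 2 := by
      rw [idA]; push_cast; noncomm_ring
    rw [this]
    exact I.sub_mem (I.mul_mem_right _ _ m0) (I.mul_mem_left _ _ m0)
  -- second element
  have idB : h ^ 2 - h - 2 * (f * e) = (e * h + e) * f - f * (e * h + e) := by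
    symm
    calc (e * h + e) * f - f * (e * h + e)
        = e * (h * f) + e * f - f * (e * h + e) := by noncomm_ring
      _ = e * (f * h + -(2 * f)) + e * f - f * (e * h + e) := by rw [R3]
      _ = (e * f) * h - 2 * (e * f) + e * f - f * (e * h + e) := by noncomm_ring
      _ = (f * e + h) * h - 2 * (f * e + h) + (f * e + h) - f * (e * h + e) := by rw [R1]
      _ = h ^ 2 - h - 2 * (f * e) := by noncomm_ring
  have m2 : h ^ 2 - h - 2 * (f * e) ∈ I := by
    rw [idB]
    exact I.sub_mem (I.mul_mem_right _ _ m1) (I.mul_mem_left _ _ m1)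
  -- third element
  have idC : ((6 : ℕ) : A) * (f * h - f)
      = f * (h ^ 2 - h - 2 * (f * e)) - (h ^ 2 - h - 2 * (f * e)) * f := by
    symm
    calc f * (h ^ 2 - h - 2 * (f * e)) - (h ^ 2 - h - 2 * (f * e)) * f
        = f * h ^ 2 - f * h - 2 * (f * (f * e))
          - (h * (h * f) - h * f - 2 * (f * (e * f))) := by noncomm_ring
      _ = f * h ^ 2 - f * h - 2 * (f * (f * e))
          - (h * (f * h + -(2 * f)) - (f * h + -(2 * f)) - 2 * (f * (e * f))) := by rw [R3]
      _ = f * h ^ 2 - f * h - 2 * (f * (f * e))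
          - ((h * f) * h - 2 * (h * f) - f * h + 2 * f - 2 * (f * (e * f))) := by noncomm_ring
      _ = f * h ^ 2 - f * h - 2 * (f * (f * e))
          - ((f * h + -(2 * f)) * h - 2 * (f * h + -(2 * f)) - f * h + 2 * f
            - 2 * (f * (e * f))) := by rw [R3]
      _ = f * h ^ 2 - f * h - 2 * (f * (f * e))
          - ((f * h + -(2 * f)) * h - 2 * (f * h + -(2 * f)) - f * h + 2 * f
            - 2 * (f * (f * e + h))) := by rw [R1]
      _ = ((6 : ℕ) : A) * (f * h - f) := by push_cast; noncomm_ring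
  have m3 : f * h - f ∈ I := by
    refine mem_of_natCast_mul_mem I 6 (by norm_num) ?_
    rw [idC]
    exact I.sub_mem (I.mul_mem_left _ _ m2) (I.mul_mem_right _ _ m2)
  -- fourth element
  have idD : ((2 : ℕ) : A) * f ^ 2 = f * (f * h - f) - (f * h - f) * f := by
    symm
    calc f * (f * h - f) - (f * h - f) * f
        = f * (f * h) - f * (h * f) := by noncomm_ring
      _ = f * (f * h) - f * (f * h + -(2 * f)) := by rw [R3]
      _ = ((2 : ℕ) : A) * f ^ 2 := by push_cast; noncomm_ring
  have m4 : f ^ 2 ∈ I := by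
    refine mem_of_natCast_mul_mem I 2 (by norm_num) ?_
    rw [idD]
    exact I.sub_mem (I.mul_mem_left _ _ m3) (I.mul_mem_right _ _ m3)
  -- fifth element
  have aux : h * (f * e) = f * (e * h) := by
    calc h * (f * e) = (h * f) * e := by rw [mul_assoc]
      _ = (f * h + -(2 * f)) * e := by rw [R3]
      _ = f * (h * e) - (2 * f) * e := by noncomm_ring
      _ = f * (e * h + 2 * e) - (2 * f) * e := by rw [R2]
      _ = f * (e * h) := by noncomm_ring
  have idE : h ^ 3 - h
      = h * (h ^ 2 - h - 2 * (f * e)) + (h ^ 2 - h - 2 * (f * e)) + (2 * f) * (e * h + e) := by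
    symm
    calc h * (h ^ 2 - h - 2 * (f * e)) + (h ^ 2 - h - 2 * (f * e)) + (2 * f) * (e * h + e)
        = (2 * (f * (e * h)) - 2 * (h * (f * e))) + (h ^ 3 - h) := by noncomm_ring
      _ = h ^ 3 - h := by rw [aux]; noncomm_ring
  have m5 : h ^ 3 - h ∈ I := by
    rw [idE]
    exact I.add_mem (I.add_mem (I.mul_mem_left _ _ m2) m2) (I.mul_mem_left _ _ m1)
  exact ⟨m1, m2, m3, m4, m5⟩
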